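/- arXiv:1402.5025 — 4 statements merged into one kernel-verified Lean document; each statement's English description precedes it below -/
import Mathlib

section
/- For any n×n unitary matrix U and any index i, the maximum over eigenvalues λ of U of |arg λ| (with arg taken in (−π, π]) is at least arccos(Re U(i,i)), i.e., max_λ |arg λ| ≥ arccos(Re U(i,i)). -/
open Matrix

private lemma arccos_antitone' : Antitone Real.arccos := fun x y h => by
  unfold Real.arccos
  exact sub_le_sub_left (Real.monotone_arcsin h) _

/-- For a unitary `U` and any diagonal index `i`, some eigenvalue `μ` of `U`
satisfies `|arg μ| ≥ arccos (Re U i i)`; i.e. the time-energy cost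
`max_λ |arg λ|` is at least `arccos (Re U i i)`. -/
theorem cost_ge_arccos_diagonal {n : ℕ} (U : Matrix (Fin n) (Fin n) ℂ)
    (hU : U ∈ Matrix.unitaryGroup (Fin n) ℂ) (i : Fin n) :
    ∃ μ ∈ spectrum ℂ U, Real.arccos (U i i).re ≤ |Complex.arg μ| := by
  classical
  set c : ℝ := (U i i).re with hc
  have hUsU : Uᴴ * U = 1 := by
    rw [← Matrix.star_eq_conjTranspose]; exact (Matrix.mem_unitaryGroup_iff').mp hU
  have hUUs : U * Uᴴ = 1 := by
    rw [← Matrix.star_eq_conjTranspose]; exact (Matrix.mem_unitaryGroup_iff).mp hU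
  set H : Matrix (Fin n) (Fin n) ℂ := U + Uᴴ with hHdef
  have hH : H.IsHermitian := by
    unfold H
    rw [Matrix.IsHermitian, conjTranspose_add, conjTranspose_conjTranspose, add_comm]
  -- Step A: some eigenvalue of H is ≤ 2c
  set W : Matrix (Fin n) (Fin n) ℂ := (hH.eigenvectorUnitary : Matrix (Fin n) (Fin n) ℂ) with hW
  set d : Fin n → ℝ := hH.eigenvalues with hd
  have hWU : W * star W = 1 := (Matrix.mem_unitaryGroup_iff).mp hH.eigenvectorUnitary.2
  have hspec : H = W * Matrix.diagonal (Complex.ofReal ∘ d) * star W := hH.spectral_theorem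
  have hHii : (H i i).re = 2 * c := by
    have : H i i = U i i + (starRingEnd ℂ) (U i i) := by
      simp [hHdef, Matrix.add_apply, Matrix.conjTranspose_apply]
    rw [this, Complex.add_conj]
    push_cast
    simp [hc]
  have hsumW : ∑ k, Complex.normSq (W i k) = 1 := by
    have h1 : (W * star W) i i = 1 := by rw [hWU]; simp
    rw [Matrix.mul_apply] at h1
    have : ∀ k, W i k * (star W) k i = (Complex.normSq (W i k) : ℂ) := by
      intro k
      simp [Matrix.star_apply, Complex.mul_conj]
    rw [Finset.sum_congr rfl (fun k _ => this k)] at h1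
    exact_mod_cast h1
  have hHii' : (H i i).re = ∑ k, d k * Complex.normSq (W i k) := by
    conv_lhs => rw [hspec]
    rw [Matrix.mul_apply]
    rw [Complex.re_sum]
    congr 1; ext k
    rw [Matrix.mul_diagonal]
    have : W i k * (Complex.ofReal ∘ d) k * (star W) k i
        = (d k : ℂ) * (Complex.normSq (W i k) : ℂ) := by
      simp [Matrix.star_apply, Function.comp]
      rw [mul_comm (W i k) _, mul_assoc, Complex.mul_conj]
    rw [this]
    simp
  have hex : ∃ k, d k ≤ 2 * c := by
    by_contra hcon
    push_neg at hcon
    have hlt : ∑ k, 2 * c * Complex.normSq (W i k) < ∑ k, d k * Complex.normSq (W i k) := by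
      apply Finset.sum_lt_sum
      · intro k _
        exact mul_le_mul_of_nonneg_right (hcon k).le (Complex.normSq_nonneg _)
      · have : ∃ k, Complex.normSq (W i k) ≠ 0 := by
          by_contra hall
          push_neg at hall
          simp [hall] at hsumW
        obtain ⟨k, hk⟩ := this
        exact ⟨k, Finset.mem_univ k, by
          have hpos : 0 < Complex.normSq (W i k) := lt_of_le_of_ne (Complex.normSq_nonneg _) (Ne.symm hk)
          exact mul_lt_mul_of_pos_right (hcon k) hpos⟩
    rw [← Finset.mul_sum, hsumW, mul_one, ← hHii', hHii] at hlt
    exact lt_irrefl _ hlt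
  obtain ⟨k, hk⟩ := hex
  set t : ℝ := d k with ht
  -- eigenvector of H
  set v : Fin n → ℂ := ⇑(hH.eigenvectorBasis k) with hv
  have hvne : v ≠ 0 := by
    have := hH.eigenvectorBasis.orthonormal.ne_zero k
    intro h
    apply this
    ext j
    exact congrFun h j
  have hHv : H *ᵥ v = (t : ℂ) • v := by
    have := hH.mulVec_eigenvectorBasis k
    rw [this]
    ext j
    simp [hv, ht, hd, Complex.real_smul]
  -- Step C: U-invariant eigenspace of H
  set f : Module.End ℂ (Fin n → ℂ) := Matrix.mulVecLin H with hf
  set g : Module.End ℂ (Fin n → ℂ) := Matrix.mulVecLin U with hg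
  set E : Submodule ℂ (Fin n → ℂ) := f.eigenspace (t : ℂ) with hE
  have hvE : v ∈ E := by
    rw [hE, Module.End.mem_eigenspace_iff]
    exact hHv
  have hcomm : H * U = U * H := by
    rw [hHdef]
    rw [add_mul, mul_add, hUsU, hUUs]
  have hinv : ∀ x ∈ E, g x ∈ E := by
    intro x hx
    rw [hE, Module.End.mem_eigenspace_iff] at hx ⊢
    simp only [hf, hg, Matrix.mulVecLin_apply] at hx ⊢
    rw [Matrix.mulVec_mulVec, hcomm, ← Matrix.mulVec_mulVec, hx, Matrix.mulVec_smul]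
  have hEnt : Nontrivial E := by
    refine nontrivial_of_ne ⟨v, hvE⟩ 0 ?_
    simp only [ne_eq, Submodule.mk_eq_zero]
    exact hvne
  obtain ⟨μ, hμ⟩ := Module.End.exists_eigenvalue (g.restrict hinv)
  obtain ⟨w', hw'⟩ := hμ.exists_hasEigenvector
  set w : Fin n → ℂ := (w' : Fin n → ℂ) with hwdef
  have hwne : w ≠ 0 := fun h => hw'.2 (Subtype.ext h)
  have hUw : U *ᵥ w = μ • w := by
    have := hw'.apply_eq_smul
    have h2 := congrArg (Subtype.val) this
    rw [LinearMap.restrict_coe_apply] at h2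
    exact h2
  have hHw : H *ᵥ w = (t : ℂ) • w := by
    have hmem : w ∈ f.eigenspace (t : ℂ) := w'.2
    have h2 := Module.End.mem_eigenspace_iff.mp hmem
    simpa [hf, Matrix.mulVecLin_apply] using h2
  -- Step D: μ ∈ spectrum
  have hμspec : μ ∈ spectrum ℂ U := by
    rw [spectrum.mem_iff]
    intro hunit
    rw [Matrix.isUnit_iff_isUnit_det] at hunit
    have hdet : (algebraMap ℂ (Matrix (Fin n) (Fin n) ℂ) μ - U).det = 0 := by
      rw [← Matrix.exists_mulVec_eq_zero_iff]
      refine ⟨w, hwne, ?_⟩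
      rw [Matrix.sub_mulVec, hUw, Algebra.algebraMap_eq_smul_one,
        Matrix.smul_mulVec, Matrix.one_mulVec, sub_self]
    rw [hdet] at hunit
    exact (not_isUnit_zero hunit)
  -- Step E: |μ| = 1
  have hwdot : dotProduct (star w) w ≠ 0 := by
    intro h
    apply hwne
    have hsum : ∑ j, Complex.normSq (w j) = 0 := by
      have : dotProduct (star w) w = ((∑ j, Complex.normSq (w j) : ℝ) : ℂ) := by
        rw [dotProduct]
        push_cast
        congr 1; ext l
        simp [Pi.star_apply, Complex.star_def, mul_comm, Complex.mul_conj]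
      rw [this] at h
      exact_mod_cast h
    ext j
    have := (Finset.sum_eq_zero_iff_of_nonneg (fun l _ => Complex.normSq_nonneg (w l))).mp hsum j (Finset.mem_univ j)
    simpa using Complex.normSq_eq_zero.mp this
  have hnorm : (starRingEnd ℂ) μ * μ = 1 := by
    have h1 : dotProduct (star (U *ᵥ w)) (U *ᵥ w) = dotProduct (star w) w := by
      rw [Matrix.star_mulVec, ← dotProduct_mulVec, Matrix.mulVec_mulVec, hUsU,
        Matrix.one_mulVec]
    rw [hUw] at h1
    rw [star_smul, smul_dotProduct, dotProduct_smul, smul_eq_mul, smul_eq_mul,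
      Complex.star_def] at h1
    have h2 : ((starRingEnd ℂ) μ * μ - 1) * dotProduct (star w) w = 0 := by
      linear_combination h1
    rcases mul_eq_zero.mp h2 with h | h
    · linear_combination h
    · exact absurd h hwdot
  have habs : ‖μ‖ = 1 := by
    have : Complex.normSq μ = 1 := by
      have := hnorm
      rw [mul_comm, Complex.mul_conj] at this
      exact_mod_cast this
    rw [← Complex.sq_norm] at this
    nlinarith [norm_nonneg μ]
  have hμne : μ ≠ 0 := by
    intro h
    rw [h] at habs
    simp at habs
  -- Step F: 2 Re μ = t
  have hUsw : Uᴴ *ᵥ w = μ⁻¹ • w := by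
    have h1 : Uᴴ *ᵥ (U *ᵥ w) = w := by
      rw [Matrix.mulVec_mulVec, hUsU, Matrix.one_mulVec]
    rw [hUw, Matrix.mulVec_smul] at h1
    have := congrArg (fun x => μ⁻¹ • x) h1
    simp only [smul_smul, inv_mul_cancel₀ hμne, one_smul] at this
    exact this
  have hre : μ.re ≤ c := by
    have hsum : ((t : ℂ) - (μ + μ⁻¹)) • w = 0 := by
      rw [sub_smul, add_smul]
      rw [← hHw, hHdef, Matrix.add_mulVec, hUw, hUsw]
      abel
    have heq : (t : ℂ) = μ + μ⁻¹ := by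
      rcases smul_eq_zero.mp hsum with h | h
      · have := sub_eq_zero.mp h
        linear_combination this
      · exact absurd h hwne
    have hinv2 : μ⁻¹ = (starRingEnd ℂ) μ := by
      field_simp
      linear_combination -hnorm
    rw [hinv2, Complex.add_conj] at heq
    have ht2 : t = 2 * μ.re := by exact_mod_cast heq
    linarith [hk, ht2]
  -- Step G
  refine ⟨μ, hμspec, ?_⟩
  have hargle : |Complex.arg μ| ≤ Real.pi := by
    rw [abs_le]
    exact ⟨(Complex.neg_pi_lt_arg μ).le, Complex.arg_le_pi μ⟩
  have hcos : Real.cos |Complex.arg μ| = μ.re := by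
    rw [Real.cos_abs, Complex.cos_arg hμne, habs, div_one]
  have harccos : Real.arccos μ.re = |Complex.arg μ| := by
    rw [← hcos, Real.arccos_cos (abs_nonneg _) hargle]
  rw [← harccos]
  exact arccos_antitone' hre
end

section
/- Let U ∈ U(r) be a unitary matrix whose top-left n×n block is diagonal with real entries d_1,...,d_n. Then the maximum over eigenvalues λ of U of |arg λ| is at least max_{1≤i≤n} arccos(d_i). (Lower-bound direction of the exact formula for the partial-U problem with diagonal fixed block.) -/
/-!
Let `μ` be an eigenvalue of `U` of smallest real part. Since `U` is normal, the spectrum of its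
real part `ℜ U = (U + Uᴴ) / 2` is the set of real parts of the eigenvalues of `U`, so
`ℜ U - (Re μ) • 1` is positive semidefinite; its `(i, i)` entry gives `Re μ ≤ d i`. As `|μ| = 1`,
`|arg μ| = arccos (Re μ) ≥ arccos (d i)`.
-/

open ComplexStarModule

theorem exists_mem_spectrum_algebraMap_re_le_realPart {A : Type*} [CStarAlgebra A]
    [PartialOrder A] [StarOrderedRing A] [Nontrivial A] (a : A) [IsStarNormal a] :
    ∃ μ ∈ spectrum ℂ a, algebraMap ℝ A μ.re ≤ (ℜ a : A) := by
  obtain ⟨μ, hμ, hmin⟩ := (spectrum.isCompact a).exists_isMinOn (spectrum.nonempty a)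
    Complex.continuous_re.continuousOn
  refine ⟨μ, hμ, ?_⟩
  rw [algebraMap_le_iff_le_spectrum (ℜ a).2, spectrum_realPart' a]
  rintro _ ⟨z, hz, rfl⟩
  exact hmin hz

theorem Matrix.realPart_apply_self {ι : Type*} (A : Matrix ι ι ℂ) (j : ι) :
    (ℜ A : Matrix ι ι ℂ) j j = (A j j).re := by
  simp [realPart_apply_coe, Complex.re_eq_add_conj]
  ring

section

open scoped Matrix.Norms.L2Operator MatrixOrder ComplexOrder

variable {ι : Type*} [Fintype ι] [DecidableEq ι]

theorem Matrix.exists_mem_spectrum_re_le_re_diag [Nonempty ι] (A : Matrix ι ι ℂ) [IsStarNormal A]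
    (j : ι) : ∃ μ ∈ spectrum ℂ A, μ.re ≤ (A j j).re := by
  obtain ⟨μ, hμ, hle⟩ := exists_mem_spectrum_algebraMap_re_le_realPart A
  have hjj := (nonneg_iff_posSemidef.mp (sub_nonneg.mpr hle)).diag_nonneg (i := j)
  rw [sub_apply, A.realPart_apply_self, algebraMap_matrix_apply, if_pos rfl, sub_nonneg,
    Complex.coe_algebraMap, Complex.real_le_real] at hjj
  exact ⟨μ, hμ, hjj⟩

theorem Matrix.norm_eq_one_of_mem_spectrum {U : Matrix ι ι ℂ} (hU : U ∈ unitaryGroup ι ℂ) {μ : ℂ}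
    (hμ : μ ∈ spectrum ℂ U) : ‖μ‖ = 1 :=
  spectrum.norm_eq_one_of_unitary hU hμ

end

theorem Complex.abs_arg_eq_arccos {z : ℂ} (hz : z ≠ 0) : |z.arg| = Real.arccos (z.re / ‖z‖) := by
  rw [← Complex.cos_arg hz, ← Real.cos_abs, Real.arccos_cos (abs_nonneg _) (abs_arg_le_pi z)]

theorem Complex.arccos_le_abs_arg_of_norm_eq_one {z : ℂ} (hz : ‖z‖ = 1) {t : ℝ} (ht : z.re ≤ t) :
    Real.arccos t ≤ |z.arg| := by
  rw [Complex.abs_arg_eq_arccos (norm_ne_zero_iff.mp (hz ▸ one_ne_zero)), hz, div_one]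
  exact Real.arccos_le_arccos ht

theorem cost_ge_arccos_diag_block_general {n r : ℕ} (h : n ≤ r)
    (U : Matrix (Fin r) (Fin r) ℂ) (hU : U ∈ Matrix.unitaryGroup (Fin r) ℂ)
    (d : Fin n → ℝ)
    (hd : ∀ i : Fin n, U (Fin.castLE h i) (Fin.castLE h i) = (d i : ℂ)) :
    ∀ i : Fin n, ∃ μ ∈ spectrum ℂ U, Real.arccos (d i) ≤ |Complex.arg μ| := by
  intro i
  have : Nonempty (Fin r) := ⟨Fin.castLE h i⟩
  have : IsStarNormal U := isStarNormal_of_mem_unitary hU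
  obtain ⟨μ, hμ, hre⟩ := U.exists_mem_spectrum_re_le_re_diag (Fin.castLE h i)
  rw [hd i, Complex.ofReal_re] at hre
  exact ⟨μ, hμ,
    Complex.arccos_le_abs_arg_of_norm_eq_one (Matrix.norm_eq_one_of_mem_spectrum hU hμ) hre⟩

/-- If the top-left `n × n` block of a unitary `U ∈ U(r)` is diagonal with real
entries `d i`, then for each `i` some eigenvalue `μ` of `U` satisfies
`|arg μ| ≥ arccos (d i)`; i.e. `max_λ |arg λ| ≥ max_i arccos (d i)`. -/
theorem cost_ge_arccos_diag_block {n r : ℕ} (h : n ≤ r)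
    (U : Matrix (Fin r) (Fin r) ℂ) (hU : U ∈ Matrix.unitaryGroup (Fin r) ℂ)
    (d : Fin n → ℝ)
    (hdiag : ∀ i j : Fin n, i ≠ j → U (Fin.castLE h i) (Fin.castLE h j) = 0)
    (hd : ∀ i : Fin n, U (Fin.castLE h i) (Fin.castLE h i) = (d i : ℂ)) :
    ∀ i : Fin n, ∃ μ ∈ spectrum ℂ U, Real.arccos (d i) ≤ |Complex.arg μ| :=
  cost_ge_arccos_diag_block_general h U hU d hd
end

section
/- If F ∈ ℂ^{n×n} is Hermitian with all eigenvalues in [−1,1], and it appears as the top-left n×n block of some unitary U ∈ U(r), then there exists a unitary U with this block whose time-energy cost max_k |arg λ_k(U)| equals arccos(λ_min(F)), where λ_min(F) is the smallest eigenvalue of F. -/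
/-!
Diagonalise `F = V diag(λ) V*` and put `θᵢ = arccos λᵢ ∈ [0, π]`. An index with `λᵢ = ±1` needs
no extra room, since the phase `exp (i θᵢ)` is `λᵢ` itself. Every other index is paired with a fresh
coordinate, on which the rotation `[[cos θᵢ, i sin θᵢ], [i sin θᵢ, cos θᵢ]]` is a unitary with
corner entry `λᵢ` and eigenvalues `exp (± i θᵢ)`. The given unitary dilation provides enough fresh
coordinates: if `C` is the block of it below `F`, then `C* C = 1 - F²`, so the number of
eigenvalues `λᵢ ≠ ±1`, which is the rank of `1 - F²`, is at most `r - n`. The resulting unitary has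
eigenvalues `exp (± i θᵢ)` and `1`, so its cost is `max θᵢ = arccos λ_min`.
-/

open Matrix Complex

namespace Matrix

section Hadamard

variable {𝕜 : Type*} [RCLike 𝕜] (α : Type*) [Fintype α] [DecidableEq α]

noncomputable def blockHadamard : Matrix (α ⊕ α) (α ⊕ α) 𝕜 :=
  (√2)⁻¹ • fromBlocks 1 1 1 (-1)

variable {α}

omit [Fintype α] in
lemma conjTranspose_blockHadamard : (blockHadamard α : Matrix _ _ 𝕜)ᴴ = blockHadamard α := by
  simp [blockHadamard, fromBlocks_conjTranspose]

lemma blockHadamard_mul_fromBlocks_mul_blockHadamard (A B : Matrix α α 𝕜) :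
    blockHadamard α * fromBlocks A 0 0 B * blockHadamard α =
      (2⁻¹ : ℝ) • fromBlocks (A + B) (A - B) (A - B) (A + B) := by
  have hc : (√2)⁻¹ * (√2)⁻¹ = (2⁻¹ : ℝ) := by
    rw [← mul_inv, Real.mul_self_sqrt zero_le_two]
  simp only [blockHadamard, Matrix.smul_mul, Matrix.mul_smul, smul_smul, hc, fromBlocks_multiply]
  congr 2 <;>
    simp only [Matrix.one_mul, Matrix.mul_one, Matrix.mul_zero, Matrix.neg_mul, Matrix.mul_neg,
      neg_neg, add_zero, zero_add] <;>
    abel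

lemma blockHadamard_mul_self : blockHadamard α * blockHadamard α = (1 : Matrix _ _ 𝕜) := by
  have h := blockHadamard_mul_fromBlocks_mul_blockHadamard (1 : Matrix α α 𝕜) 1
  rw [fromBlocks_one, Matrix.mul_one] at h
  rw [h, sub_self, fromBlocks_smul, smul_zero, ← two_smul ℝ, smul_smul,
    inv_mul_cancel₀ two_ne_zero, one_smul, fromBlocks_one]

lemma blockHadamard_mem_unitaryGroup : blockHadamard α ∈ unitaryGroup (α ⊕ α) 𝕜 := by
  rw [mem_unitaryGroup_iff, star_eq_conjTranspose, conjTranspose_blockHadamard,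
    blockHadamard_mul_self]

end Hadamard

section Unitary

variable {α : Type*} [CommRing α] [StarRing α] {m n : Type*} [Fintype m] [DecidableEq m]
  [Fintype n] [DecidableEq n]

lemma reindex_mem_unitaryGroup (e : m ≃ n) {U : Matrix m m α} (hU : U ∈ unitaryGroup m α) :
    reindex e e U ∈ unitaryGroup n α := by
  rw [mem_unitaryGroup_iff', star_eq_conjTranspose, conjTranspose_reindex,
    ← coe_reindexAlgEquiv α α, ← map_mul, ← star_eq_conjTranspose,
    mem_unitaryGroup_iff'.mp hU, map_one]

lemma diagonal_mem_unitaryGroup {w : m → α} (hw : ∀ i, w i ∈ unitary α) :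
    diagonal w ∈ unitaryGroup m α := by
  rw [mem_unitaryGroup_iff, star_eq_conjTranspose, diagonal_conjTranspose, diagonal_mul_diagonal,
    ← diagonal_one]
  exact congrArg diagonal (funext fun i => Unitary.mul_star_self_of_mem (hw i))

lemma fromBlocks_mem_unitaryGroup {A : Matrix m m α} {B : Matrix n n α}
    (hA : A ∈ unitaryGroup m α) (hB : B ∈ unitaryGroup n α) :
    fromBlocks A 0 0 B ∈ unitaryGroup (m ⊕ n) α := by
  rw [mem_unitaryGroup_iff, star_eq_conjTranspose, fromBlocks_conjTranspose, fromBlocks_multiply,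
    ← star_eq_conjTranspose, ← star_eq_conjTranspose, mem_unitaryGroup_iff.mp hA,
    mem_unitaryGroup_iff.mp hB]
  simp

lemma one_sub_conjTranspose_mul_toBlocks₁₁ {U : Matrix (m ⊕ n) (m ⊕ n) α}
    (hU : U ∈ unitaryGroup (m ⊕ n) α) :
    1 - U.toBlocks₁₁ᴴ * U.toBlocks₁₁ = U.toBlocks₂₁ᴴ * U.toBlocks₂₁ := by
  have h := congrArg toBlocks₁₁ (mem_unitaryGroup_iff'.mp hU)
  rw [← fromBlocks_toBlocks U, star_eq_conjTranspose, fromBlocks_conjTranspose,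
    fromBlocks_multiply, toBlocks_fromBlocks₁₁, ← fromBlocks_one, toBlocks_fromBlocks₁₁] at h
  rw [← h, add_sub_cancel_left]

omit [DecidableEq m] in
lemma toBlocks₁₁_fromBlocks_mul_mul_fromBlocks (V : Matrix m m α) (N : Matrix (m ⊕ n) (m ⊕ n) α) :
    (fromBlocks V 0 0 1 * N * fromBlocks Vᴴ 0 0 1).toBlocks₁₁ = V * N.toBlocks₁₁ * Vᴴ := by
  rw [← fromBlocks_toBlocks N]
  simp [fromBlocks_multiply]

end Unitary

lemma toBlocks₁₁_reindex_sumCongr {R l m n o : Type*} (e₁ : l ≃ n) (e₂ : m ≃ o)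
    (M : Matrix (l ⊕ m) (l ⊕ m) R) :
    (reindex (e₁.sumCongr e₂) (e₁.sumCongr e₂) M).toBlocks₁₁ = reindex e₁ e₁ M.toBlocks₁₁ :=
  rfl

lemma toBlocks₁₁_reindex_sumSumSumComm {R α β γ δ : Type*} [Zero R]
    (X : Matrix (α ⊕ β) (α ⊕ β) R) (Y : Matrix (γ ⊕ δ) (γ ⊕ δ) R) :
    (reindex (Equiv.sumSumSumComm α β γ δ) (Equiv.sumSumSumComm α β γ δ)
      (fromBlocks X 0 0 Y)).toBlocks₁₁ = fromBlocks X.toBlocks₁₁ 0 0 Y.toBlocks₁₁ := by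
  ext (i | i) (j | j) <;> rfl

lemma spectrum_reindex {R A : Type*} [CommSemiring R] [Ring A] [Algebra R A]
    {m n : Type*} [Fintype m] [DecidableEq m] [Fintype n] [DecidableEq n]
    (e : m ≃ n) (M : Matrix m m A) : spectrum R (reindex e e M) = spectrum R M := by
  rw [← coe_reindexAlgEquiv R, AlgEquiv.spectrum_eq]

section Rank

variable {𝕜 : Type*} [RCLike 𝕜] {m n : Type*} [Fintype m] [DecidableEq m] [Fintype n]
  [DecidableEq n]

open scoped ComplexOrder in
lemma rank_one_sub_conjTranspose_mul_toBlocks₁₁_le {U : Matrix (m ⊕ n) (m ⊕ n) 𝕜}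
    (hU : U ∈ unitaryGroup (m ⊕ n) 𝕜) :
    (1 - U.toBlocks₁₁ᴴ * U.toBlocks₁₁).rank ≤ Fintype.card n := by
  rw [one_sub_conjTranspose_mul_toBlocks₁₁ hU, rank_conjTranspose_mul_self]
  exact rank_le_card_height _

lemma IsHermitian.rank_one_sub_mul_self {A : Matrix m m 𝕜} (hA : A.IsHermitian) :
    (1 - A * A).rank = Fintype.card {i // hA.eigenvalues i ^ 2 ≠ 1} := by
  let V := hA.eigenvectorUnitary
  have h : 1 - A * A = Unitary.conjStarAlgAut 𝕜 _ V
      (diagonal fun i => 1 - (hA.eigenvalues i : 𝕜) ^ 2) := by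
    conv_lhs => rw [hA.spectral_theorem]
    rw [← map_mul, ← map_one (Unitary.conjStarAlgAut 𝕜 _ V), ← map_sub, ← diagonal_one,
      diagonal_mul_diagonal, diagonal_sub]
    simp [sq]
  rw [h, Unitary.conjStarAlgAut_apply, ← Unitary.coe_star,
    rank_mul_eq_left_of_isUnit_det _ _ (UnitaryGroup.det_isUnit (star V)),
    rank_mul_eq_right_of_isUnit_det _ _ (UnitaryGroup.det_isUnit V), rank_diagonal]
  exact Fintype.card_congr (Equiv.subtypeEquivRight fun i => by
    rw [sub_ne_zero, ne_comm]; norm_cast)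

end Rank

lemma IsHermitian.exists_unitary_dilation_of_diagonal {𝕜 : Type*} [RCLike 𝕜]
    {ι κ : Type*} [Fintype ι] [DecidableEq ι] [Fintype κ] [DecidableEq κ] {A : Matrix ι ι 𝕜}
    (hA : A.IsHermitian) {N : Matrix (ι ⊕ κ) (ι ⊕ κ) 𝕜} (hN : N ∈ unitaryGroup (ι ⊕ κ) 𝕜)
    (hN₁₁ : N.toBlocks₁₁ = diagonal (fun i => (hA.eigenvalues i : 𝕜))) :
    ∃ M ∈ unitaryGroup (ι ⊕ κ) 𝕜, M.toBlocks₁₁ = A ∧ spectrum 𝕜 M = spectrum 𝕜 N := by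
  let V := hA.eigenvectorUnitary
  let W : Matrix (ι ⊕ κ) (ι ⊕ κ) 𝕜 := Matrix.fromBlocks V 0 0 1
  have hW : W ∈ unitaryGroup (ι ⊕ κ) 𝕜 := fromBlocks_mem_unitaryGroup V.2 (one_mem _)
  refine ⟨W * N * star W, mul_mem (mul_mem hW hN) (Unitary.star_mem hW), ?_,
    Unitary.spectrum_star_right_conjugate (U := ⟨W, hW⟩)⟩
  rw [star_eq_conjTranspose, Matrix.fromBlocks_conjTranspose]
  simp only [conjTranspose_zero, conjTranspose_one]
  rw [toBlocks₁₁_fromBlocks_mul_mul_fromBlocks, hN₁₁]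
  conv_rhs => rw [hA.spectral_theorem, Unitary.conjStarAlgAut_apply]
  rfl

end Matrix

namespace Complex

lemma exp_ofReal_mul_I_mem_unitary (x : ℝ) : exp (x * I) ∈ unitary ℂ := by
  rw [Unitary.mem_iff_star_mul_self, star_def, conj_mul', norm_exp_ofReal_mul_I, ofReal_one,
    one_pow]

lemma abs_arg_exp_ofReal_mul_I {θ : ℝ} (h₀ : 0 ≤ θ) (hπ : θ ≤ Real.pi) :
    |arg (exp (θ * I))| = θ := by
  rw [exp_mul_I, arg_cos_add_sin_mul_I ⟨by linarith [Real.pi_pos], hπ⟩, abs_of_nonneg h₀]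

lemma abs_arg_exp_neg_ofReal_mul_I {θ : ℝ} (h₀ : 0 ≤ θ) (hπ : θ ≤ Real.pi) :
    |arg (exp (-θ * I))| = θ := by
  rw [neg_mul, exp_neg, abs_arg_inv, abs_arg_exp_ofReal_mul_I h₀ hπ]

lemma exp_arccos_mul_I_of_sq_eq_one {x : ℝ} (hx : x ^ 2 = 1) :
    exp (Real.arccos x * I) = x := by
  have hx' : -1 ≤ x ∧ x ≤ 1 := by constructor <;> nlinarith
  rw [exp_mul_I, ← ofReal_cos, ← ofReal_sin, Real.cos_arccos hx'.1 hx'.2, Real.sin_arccos, hx,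
    sub_self, Real.sqrt_zero]
  simp

end Complex

noncomputable def timeEnergyCost {m : Type*} [Fintype m] [DecidableEq m] (U : Matrix m m ℂ) : ℝ :=
  sSup ((fun μ => |arg μ|) '' spectrum ℂ U)

section RotationDilation

variable {ι : Type*} [Fintype ι] [DecidableEq ι] (θ : ι → ℝ) (p : ι → Prop) [DecidablePred p]
  (τ : Type*) [Fintype τ] [DecidableEq τ]

noncomputable def rotationPhases : ({i // p i} ⊕ {i // p i}) ⊕ ({i // ¬p i} ⊕ τ) → ℂ :=
  Sum.elim (Sum.elim (fun i => exp (θ i * I)) (fun i => exp (-θ i * I)))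
    (Sum.elim (fun i => exp (θ i * I)) 1)

noncomputable def rotationBasis :
    Matrix (({i // p i} ⊕ {i // p i}) ⊕ ({i // ¬p i} ⊕ τ))
      (({i // p i} ⊕ {i // p i}) ⊕ ({i // ¬p i} ⊕ τ)) ℂ :=
  fromBlocks (blockHadamard _) 0 0 1

/-- Conjugating by the Hadamard block turns the phases `exp (± i θ)` on the two copies of
`{i // p i}` into the rotations `[[cos θ, i sin θ], [i sin θ, cos θ]]`; the reindexing moves the
first copy next to `{i // ¬p i}`, so that the top-left block is indexed by a copy of `ι`. -/
noncomputable def rotationDilation :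
    Matrix (({i // p i} ⊕ {i // ¬p i}) ⊕ ({i // p i} ⊕ τ))
      (({i // p i} ⊕ {i // ¬p i}) ⊕ ({i // p i} ⊕ τ)) ℂ :=
  reindex (Equiv.sumSumSumComm _ _ _ _) (Equiv.sumSumSumComm _ _ _ _)
    (rotationBasis p τ * diagonal (rotationPhases θ p τ) * star (rotationBasis p τ))

lemma rotationBasis_mem_unitaryGroup : rotationBasis p τ ∈ unitaryGroup _ ℂ :=
  fromBlocks_mem_unitaryGroup blockHadamard_mem_unitaryGroup (one_mem _)

lemma rotationDilation_mem_unitaryGroup : rotationDilation θ p τ ∈ unitaryGroup _ ℂ := by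
  have hQ := rotationBasis_mem_unitaryGroup p τ
  refine reindex_mem_unitaryGroup _
    (mul_mem (mul_mem hQ (diagonal_mem_unitaryGroup ?_)) (Unitary.star_mem hQ))
  rintro ((i | i) | (i | t))
  · exact exp_ofReal_mul_I_mem_unitary _
  · simpa [rotationPhases] using exp_ofReal_mul_I_mem_unitary (-θ i)
  · exact exp_ofReal_mul_I_mem_unitary _
  · exact one_mem _

lemma spectrum_rotationDilation :
    spectrum ℂ (rotationDilation θ p τ) = Set.range (rotationPhases θ p τ) := by
  rw [rotationDilation, spectrum_reindex,
    Unitary.spectrum_star_right_conjugate (U := ⟨_, rotationBasis_mem_unitaryGroup p τ⟩),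
    spectrum_diagonal]

lemma toBlocks₁₁_rotationDilation :
    (rotationDilation θ p τ).toBlocks₁₁ =
      fromBlocks (diagonal fun i : {i // p i} => (Real.cos (θ i) : ℂ)) 0 0
        (diagonal fun i : {i // ¬p i} => exp (θ i * I)) := by
  have hblocks : rotationBasis p τ * diagonal (rotationPhases θ p τ) * star (rotationBasis p τ) =
      fromBlocks
        (blockHadamard {i // p i} *
          fromBlocks (diagonal fun i : {i // p i} => exp (θ i * I)) 0 0
            (diagonal fun i : {i // p i} => exp (-θ i * I)) *
          blockHadamard {i // p i}) 0 0
        (diagonal (Sum.elim (fun i : {i // ¬p i} => exp (θ i * I)) (1 : τ → ℂ))) := by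
    simp only [rotationPhases, ← fromBlocks_diagonal, rotationBasis, star_eq_conjTranspose,
      fromBlocks_conjTranspose, conjTranspose_blockHadamard, fromBlocks_multiply]
    simp
  rw [rotationDilation, hblocks, toBlocks₁₁_reindex_sumSumSumComm,
    blockHadamard_mul_fromBlocks_mul_blockHadamard, fromBlocks_smul, toBlocks_fromBlocks₁₁,
    toBlocks₁₁_diagonal, diagonal_add, ← diagonal_smul]
  congr
  ext i
  rw [Pi.smul_apply, ofReal_cos, ← two_cos]
  simp

variable {θ} in
lemma timeEnergyCost_rotationDilation [Nonempty ι] (hθ : ∀ i, θ i ∈ Set.Icc 0 Real.pi) :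
    timeEnergyCost (rotationDilation θ p τ) = ⨆ i, θ i := by
  have hθ_le : ∀ i, θ i ≤ ⨆ i, θ i := le_ciSup (Set.finite_range θ).bddAbove
  have hle : ∀ a, |arg (rotationPhases θ p τ a)| ≤ ⨆ i, θ i := by
    rintro ((i | i) | (i | t))
    · exact (abs_arg_exp_ofReal_mul_I (hθ i).1 (hθ i).2).trans_le (hθ_le i)
    · exact (abs_arg_exp_neg_ofReal_mul_I (hθ i).1 (hθ i).2).trans_le (hθ_le i)
    · exact (abs_arg_exp_ofReal_mul_I (hθ i).1 (hθ i).2).trans_le (hθ_le i)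
    · simpa [rotationPhases] using
        (hθ (Classical.arbitrary ι)).1.trans (hθ_le (Classical.arbitrary ι))
  have hattained : ∀ i, ∃ a, |arg (rotationPhases θ p τ a)| = θ i := by
    intro i
    by_cases hi : p i
    · exact ⟨.inl (.inl ⟨i, hi⟩), abs_arg_exp_ofReal_mul_I (hθ i).1 (hθ i).2⟩
    · exact ⟨.inr (.inl ⟨i, hi⟩), abs_arg_exp_ofReal_mul_I (hθ i).1 (hθ i).2⟩
  rw [timeEnergyCost, spectrum_rotationDilation, ← Set.range_comp]
  obtain ⟨a, -⟩ := hattained (Classical.arbitrary ι)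
  refine le_antisymm (csSup_le ⟨_, a, rfl⟩ (Set.forall_mem_range.2 hle)) (ciSup_le fun i => ?_)
  obtain ⟨b, hb⟩ := hattained i
  exact hb ▸ le_csSup (Set.finite_range _).bddAbove ⟨b, rfl⟩

end RotationDilation

theorem exists_unitary_dilation_diagonal {ι κ : Type*} [Fintype ι] [DecidableEq ι] [Nonempty ι]
    [Fintype κ] [DecidableEq κ] {x : ι → ℝ} (hx : ∀ i, x i ∈ Set.Icc (-1) 1)
    (hcard : Fintype.card {i // x i ^ 2 ≠ 1} ≤ Fintype.card κ) :
    ∃ N ∈ unitaryGroup (ι ⊕ κ) ℂ, N.toBlocks₁₁ = diagonal (fun i => (x i : ℂ)) ∧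
      timeEnergyCost N = Real.arccos (⨅ i, x i) := by
  let τ := Fin (Fintype.card κ - Fintype.card {i // x i ^ 2 ≠ 1})
  have eκ : {i // x i ^ 2 ≠ 1} ⊕ τ ≃ κ := Fintype.equivOfCardEq (by
    simp only [τ, Fintype.card_sum, Fintype.card_fin]; omega)
  let p : ι → Prop := fun i => x i ^ 2 ≠ 1
  let σ := (Equiv.sumCompl p).sumCongr eκ
  refine ⟨reindex σ σ (rotationDilation (fun i => Real.arccos (x i)) _ τ),
    reindex_mem_unitaryGroup _ (rotationDilation_mem_unitaryGroup _ _ _), ?_, ?_⟩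
  · rw [toBlocks₁₁_reindex_sumCongr, toBlocks₁₁_rotationDilation, fromBlocks_diagonal,
      reindex_apply, submatrix_diagonal_equiv]
    congr
    funext i
    by_cases hi : x i ^ 2 = 1
    · rw [Function.comp_apply, Equiv.sumCompl_symm_apply_of_neg (p := p) (not_not.2 hi),
        Sum.elim_inr, exp_arccos_mul_I_of_sq_eq_one hi]
    · rw [Function.comp_apply, Equiv.sumCompl_symm_apply_of_pos (p := p) hi, Sum.elim_inl,
        Real.cos_arccos (hx i).1 (hx i).2]
  · rw [timeEnergyCost, spectrum_reindex, ← timeEnergyCost,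
      timeEnergyCost_rotationDilation _ _ fun i => ⟨Real.arccos_nonneg _, Real.arccos_le_pi _⟩,
      Real.antitone_arccos.map_ciInf_of_continuousAt Real.continuous_arccos.continuousAt
        (Set.finite_range x).bddBelow]

/-- If a Hermitian `F` with eigenvalues in `[-1,1]` is the top-left `n × n`
block of some unitary of size `r`, then there is a unitary of size `r` with
this block whose time-energy cost `max_k |arg λ_k|` equals
`arccos (λ_min F)`. -/
theorem exists_unitary_cost_eq_arccos_lambda_min {n r : ℕ} (hn : 0 < n) (h : n ≤ r)
    (F : Matrix (Fin n) (Fin n) ℂ) (hF : F.IsHermitian)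
    (hEig : ∀ i, hF.eigenvalues i ∈ Set.Icc (-1 : ℝ) 1)
    (hEmbed : ∃ U : Matrix (Fin r) (Fin r) ℂ,
      U ∈ Matrix.unitaryGroup (Fin r) ℂ ∧
      ∀ i j : Fin n, U (Fin.castLE h i) (Fin.castLE h j) = F i j) :
    ∃ U : Matrix (Fin r) (Fin r) ℂ,
      U ∈ Matrix.unitaryGroup (Fin r) ℂ ∧
      (∀ i j : Fin n, U (Fin.castLE h i) (Fin.castLE h j) = F i j) ∧
      sSup ((fun μ => |Complex.arg μ|) '' spectrum ℂ U) =
        Real.arccos (⨅ i, hF.eigenvalues i) := by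
  obtain ⟨U₀, hU₀, hU₀F⟩ := hEmbed
  have : Nonempty (Fin n) := ⟨⟨0, hn⟩⟩
  let e : Fin n ⊕ Fin (r - n) ≃ Fin r := finSumFinEquiv.trans (finCongr (Nat.add_sub_of_le h))
  have he : ∀ i, e (Sum.inl i) = Fin.castLE h i := fun i => rfl
  have hU₀₁₁ : (reindex e.symm e.symm U₀).toBlocks₁₁ = F := by
    ext i j
    simp [toBlocks₁₁, he, hU₀F]
  have hcard : Fintype.card {i // hF.eigenvalues i ^ 2 ≠ 1} ≤ Fintype.card (Fin (r - n)) := by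
    have := rank_one_sub_conjTranspose_mul_toBlocks₁₁_le (reindex_mem_unitaryGroup e.symm hU₀)
    rwa [hU₀₁₁, hF.eq, hF.rank_one_sub_mul_self] at this
  obtain ⟨N, hN, hN₁₁, hNcost⟩ := exists_unitary_dilation_diagonal hEig hcard
  obtain ⟨M, hM, hM₁₁, hMN⟩ := hF.exists_unitary_dilation_of_diagonal hN hN₁₁
  refine ⟨reindex e e M, reindex_mem_unitaryGroup e hM, fun i j => ?_, ?_⟩
  · rw [← he, ← he, reindex_apply, submatrix_apply, e.symm_apply_apply, e.symm_apply_apply,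
      ← hM₁₁]
    rfl
  · rw [spectrum_reindex, hMN, ← hNcost]
    rfl
end

section
/- Let F_1 ∈ ℂ^{n×n} be the top-left n×n block of a unitary U ∈ U(r) (n ≤ r), and let μ be any eigenvalue of F_1. Then the time-energy cost max_k |arg λ_k(U)| of U is at least arccos(Re μ). -/
/-!
Extending an eigenvector `v` of `F₁` by zeros gives a vector `w` with `w* U w = μ ‖w‖²`, so
`2 Re μ` is a value of the Rayleigh quotient of the Hermitian matrix `U + U*` and hence at least
its smallest eigenvalue `t`. Since `(U + U* - t) U = U² - t U + 1`, the spectral mapping theorem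
gives an eigenvalue `ν` of `U` with `ν² - t ν + 1 = 0`; as `|ν| = 1` this says `t = 2 Re ν`.
So `Re ν ≤ Re μ`, and `|arg ν| = arccos (Re ν) ≥ arccos (Re μ)`.
-/

open Matrix Polynomial ComplexConjugate Function

theorem spectrum.exists_sq_sub_mul_add_one_eq_zero_of_mem_spectrum_add_star {𝕜 A : Type*}
    [Field 𝕜] [IsAlgClosed 𝕜] [Ring A] [StarRing A] [Algebra 𝕜 A] {u : A} (hu : u ∈ unitary A)
    {t : 𝕜} (ht : t ∈ spectrum 𝕜 (u + star u)) : ∃ ν ∈ spectrum 𝕜 u, ν ^ 2 - t * ν + 1 = 0 := by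
  set p : 𝕜[X] := X ^ 2 - C t * X + 1
  have hp : aeval u p = (u + star u - algebraMap 𝕜 A t) * u := by
    simp only [p, map_add, map_sub, map_mul, aeval_X, aeval_C, map_one, sub_mul, add_mul,
      Unitary.star_mul_self_of_mem hu, sq]
    abel
  have hdeg : p.degree = 2 := by simp only [p]; compute_degree!
  have h0 : (0 : 𝕜) ∈ spectrum 𝕜 (aeval u p) := by
    rw [spectrum.zero_mem_iff, hp, (Unitary.isUnit_coe (U := ⟨u, hu⟩)).mul_right_iff]
    rwa [spectrum.mem_iff, ← neg_sub, IsUnit.neg_iff] at ht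
  rw [spectrum.map_polynomial_aeval_of_degree_pos u p (by rw [hdeg]; decide)] at h0
  obtain ⟨ν, hν, hpν⟩ := h0
  exact ⟨ν, hν, by simpa [p] using hpν⟩

theorem spectrum.exists_eq_two_mul_re_of_mem_spectrum_add_star {E : Type*} [NormedRing E]
    [StarRing E] [CStarRing E] [NormedAlgebra ℂ E] [CompleteSpace E] {u : E} (hu : u ∈ unitary E)
    {t : ℝ} (ht : (t : ℂ) ∈ spectrum ℂ (u + star u)) : ∃ ν ∈ spectrum ℂ u, t = 2 * ν.re := by
  obtain ⟨ν, hν, hroot⟩ := exists_sq_sub_mul_add_one_eq_zero_of_mem_spectrum_add_star hu ht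
  have hconj : conj ν * ν = 1 := by
    rw [Complex.conj_mul', spectrum.norm_eq_one_of_unitary hu hν]; norm_num
  refine ⟨ν, hν, Complex.ofReal_injective ?_⟩
  rw [← Complex.add_conj]
  exact mul_right_cancel₀ (right_ne_zero_of_mul_eq_one hconj)
    (by linear_combination -hroot - hconj)

theorem Matrix.IsHermitian.exists_mem_spectrum_mul_re_le {ι 𝕜 : Type*} [Fintype ι]
    [DecidableEq ι] [Nonempty ι] [RCLike 𝕜] {A : Matrix ι ι 𝕜} (hA : A.IsHermitian)
    (w : ι → 𝕜) :
    ∃ t ∈ spectrum ℝ A, t * RCLike.re (star w ⬝ᵥ w) ≤ RCLike.re (star w ⬝ᵥ (A *ᵥ w)) := by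
  open scoped MatrixOrder in
  obtain ⟨i, hi⟩ := Finite.exists_min hA.eigenvalues
  refine ⟨hA.eigenvalues i, hA.eigenvalues_mem_spectrum_real i, ?_⟩
  have hle : algebraMap ℝ _ (hA.eigenvalues i) ≤ A := by
    rw [algebraMap_le_iff_le_spectrum hA.isSelfAdjoint, hA.spectrum_real_eq_range_eigenvalues]
    rintro _ ⟨j, rfl⟩
    exact hi j
  have hpsd := (Matrix.le_iff.mp hle).re_dotProduct_nonneg w
  simp only [sub_mulVec, Algebra.algebraMap_eq_smul_one, smul_mulVec, one_mulVec, dotProduct_sub,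
    dotProduct_smul, map_sub, RCLike.smul_re] at hpsd
  linarith

theorem Matrix.star_dotProduct_conjTranspose_mulVec {n R : Type*} [Fintype n]
    [NonUnitalSemiring R] [StarRing R] (A : Matrix n n R) (v w : n → R) :
    star v ⬝ᵥ (Aᴴ *ᵥ w) = star (star w ⬝ᵥ (A *ᵥ v)) := by
  rw [star_dotProduct, star_mulVec, conjTranspose_conjTranspose, dotProduct_mulVec]

theorem Matrix.exists_mem_spectrum_re_mul_le_of_mem_unitaryGroup {ι : Type*} [Fintype ι]
    [DecidableEq ι] [Nonempty ι] {U : Matrix ι ι ℂ} (hU : U ∈ unitaryGroup ι ℂ) (w : ι → ℂ) :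
    ∃ ν ∈ spectrum ℂ U, ν.re * (star w ⬝ᵥ w).re ≤ (star w ⬝ᵥ (U *ᵥ w)).re := by
  open scoped Matrix.Norms.L2Operator in
  have hH : (U + Uᴴ).IsHermitian := by simp [IsHermitian, add_comm]
  obtain ⟨t, ht, hle⟩ := hH.exists_mem_spectrum_mul_re_le w
  obtain ⟨ν, hν, rfl⟩ := spectrum.exists_eq_two_mul_re_of_mem_spectrum_add_star hU
    (spectrum.algebraMap_mem ℂ ht)
  refine ⟨ν, hν, ?_⟩
  rw [add_mulVec, dotProduct_add, map_add, star_dotProduct_conjTranspose_mulVec] at hle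
  simp only [RCLike.re_to_complex, Complex.star_def, Complex.conj_re] at hle
  linarith

theorem Matrix.exists_mulVec_eq_smul_of_mem_spectrum {n K : Type*} [Fintype n] [DecidableEq n]
    [Field K] {A : Matrix n n K} {μ : K} (hμ : μ ∈ spectrum K A) : ∃ v ≠ 0, A *ᵥ v = μ • v := by
  rw [← spectrum_toLin', ← Module.End.hasEigenvalue_iff_mem_spectrum] at hμ
  obtain ⟨v, hv⟩ := hμ.exists_hasEigenvector
  exact ⟨v, hv.2, by simpa using hv.apply_eq_smul⟩

theorem Function.star_extend_zero {m n R : Type*} [AddMonoid R] [StarAddMonoid R]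
    (e : m → n) (v : m → R) : star (extend e v 0) = extend e (star v) 0 := by
  ext j
  rw [Pi.star_apply, apply_extend star]
  congr
  exact funext fun _ => star_zero _

section ExtendByZero

variable {m n R : Type*} [Fintype m] [Fintype n] {e : m → n}

theorem Matrix.extend_zero_dotProduct [NonUnitalNonAssocSemiring R] (he : Injective e)
    (v : m → R) (f : n → R) : extend e v 0 ⬝ᵥ f = v ⬝ᵥ (f ∘ e) :=
  (Fintype.sum_of_injective e he _ _
    (fun j hj => by simp [extend_apply' _ _ _ hj]) (fun i => by simp [he.extend_apply])).symm

theorem Matrix.dotProduct_extend_zero [NonUnitalNonAssocSemiring R] (he : Injective e)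
    (f : n → R) (v : m → R) : f ⬝ᵥ extend e v 0 = (f ∘ e) ⬝ᵥ v :=
  (Fintype.sum_of_injective e he _ _
    (fun j hj => by simp [extend_apply' _ _ _ hj]) (fun i => by simp [he.extend_apply])).symm

theorem Matrix.star_extend_zero_dotProduct_mulVec [NonUnitalSemiring R] [StarRing R]
    (he : Injective e) (A : Matrix n n R) (v : m → R) :
    star (extend e v 0) ⬝ᵥ (A *ᵥ extend e v 0) = star v ⬝ᵥ (A.submatrix e e *ᵥ v) := by
  have hmulVec : (A *ᵥ extend e v 0) ∘ e = A.submatrix e e *ᵥ v :=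
    funext fun i => dotProduct_extend_zero he (fun j => A (e i) j) v
  rw [star_extend_zero, extend_zero_dotProduct he, hmulVec]

theorem Matrix.star_extend_zero_dotProduct_self [NonUnitalNonAssocSemiring R] [StarRing R]
    (he : Injective e) (v : m → R) : star (extend e v 0) ⬝ᵥ extend e v 0 = star v ⬝ᵥ v := by
  rw [star_extend_zero, extend_zero_dotProduct he, extend_comp he]

end ExtendByZero

theorem Complex.abs_arg_eq_arccos_re_div_norm {z : ℂ} (hz : z ≠ 0) :
    |arg z| = Real.arccos (z.re / ‖z‖) := by
  rw [← cos_arg hz, ← Real.cos_abs, Real.arccos_cos (abs_nonneg _) (abs_arg_le_pi z)]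

/-- If `F₁` is the top-left `n × n` block of a unitary `U ∈ U(r)` and `μ` is an
eigenvalue of `F₁`, then some eigenvalue `ν` of `U` satisfies
`|arg ν| ≥ arccos (Re μ)`. -/
theorem cost_ge_arccos_re_block_eigenvalue {n r : ℕ} (h : n ≤ r)
    (U : Matrix (Fin r) (Fin r) ℂ) (hU : U ∈ Matrix.unitaryGroup (Fin r) ℂ)
    (F₁ : Matrix (Fin n) (Fin n) ℂ)
    (hF₁ : F₁ = Matrix.of fun i j : Fin n => U (Fin.castLE h i) (Fin.castLE h j))
    (μ : ℂ) (hμ : μ ∈ spectrum ℂ F₁) :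
    ∃ ν ∈ spectrum ℂ U, Real.arccos μ.re ≤ |Complex.arg ν| := by
  open scoped ComplexOrder Matrix.Norms.L2Operator in
  obtain ⟨v, hv0, hv⟩ := exists_mulVec_eq_smul_of_mem_spectrum hμ
  have hinj := Fin.castLE_injective h
  obtain ⟨i, -⟩ := Function.ne_iff.mp hv0
  have : Nonempty (Fin r) := ⟨Fin.castLE h i⟩
  obtain ⟨ν, hν, hle⟩ :=
    exists_mem_spectrum_re_mul_le_of_mem_unitaryGroup hU (extend (Fin.castLE h) v 0)
  have hF : F₁ = U.submatrix (Fin.castLE h) (Fin.castLE h) := hF₁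
  rw [star_extend_zero_dotProduct_mulVec hinj, ← hF, hv, star_extend_zero_dotProduct_self hinj,
    dotProduct_smul, smul_eq_mul] at hle
  obtain ⟨hre, him⟩ := Complex.pos_iff.mp (dotProduct_star_self_pos_iff.mpr hv0)
  rw [Complex.mul_re, ← him, mul_zero, sub_zero] at hle
  have hν1 : ‖ν‖ = 1 := spectrum.norm_eq_one_of_unitary hU hν
  refine ⟨ν, hν, ?_⟩
  rw [Complex.abs_arg_eq_arccos_re_div_norm (ne_zero_of_norm_ne_zero (by simp [hν1])), hν1,
    div_one]
  exact Real.arccos_le_arccos (le_of_mul_le_mul_right hle hre)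
end
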